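/- For every integer n ≥ 2, the generalized velocity diameters satisfy D_{n+1} ≤ (1 - C_n) D_{n-2}, where C_n := e^{-KT} min{e^{-K(T+τ̄)}, e^{-KT} φ(nT) α̃} ∈ (0,1) is independent of the number N of agents. -/

import Mathlib

open scoped BigOperators RealInnerProductSpace

/-- The Cucker-Smale system with time-dependent pointwise time delay and
communication failures (weight function `α`). -/
structure CS (d N : ℕ) where
  /-- positions -/
  x : Fin N → ℝ → EuclideanSpace ℝ (Fin d)
  /-- velocities -/
  v : Fin N → ℝ → EuclideanSpace ℝ (Fin d)
  /-- influence function -/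
  ψ : ℝ → ℝ
  /-- weight function modelling communication failures -/
  α : ℝ → ℝ
  /-- time delay function -/
  τ : ℝ → ℝ
  /-- bound on the time delay -/
  τbar : ℝ
  τbar_nonneg : 0 ≤ τbar
  τ_cont : Continuous τ
  τ_mem : ∀ t, 0 ≤ t → τ t ∈ Set.Icc 0 τbar
  ψ_pos : ∀ r, 0 < ψ r
  ψ_cont : Continuous ψ
  ψ_bdd : BddAbove (Set.range ψ)
  α_meas : Measurable α
  α_mem : ∀ t, 0 ≤ t → α t ∈ Set.Icc (0:ℝ) 1
  x_cont : ∀ i, Continuous (x i)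
  v_cont : ∀ i, Continuous (v i)
  x_deriv : ∀ i, ∀ t, 0 < t → HasDerivAt (x i) (v i t) t
  v_deriv : ∀ i, ∀ t, 0 < t → HasDerivAt (v i)
    (∑ j ∈ Finset.univ.erase i,
      (α t * (ψ ‖x i t - x j (t - τ t)‖ / ((N : ℝ) - 1))) • (v j (t - τ t) - v i t)) t

namespace CS

variable {d N : ℕ}

/-- communication rates -/
noncomputable def b (S : CS d N) (i j : Fin N) (t : ℝ) : ℝ :=
  S.ψ ‖S.x i t - S.x j (t - S.τ t)‖ / ((N : ℝ) - 1)

/-- `K = ‖ψ‖_∞` -/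
noncomputable def K (S : CS d N) : ℝ := sSup (Set.range S.ψ)

/-- position diameter -/
noncomputable def dX (S : CS d N) (t : ℝ) : ℝ :=
  sSup {r | ∃ i j : Fin N, r = ‖S.x i t - S.x j t‖}

/-- velocity diameter -/
noncomputable def dV (S : CS d N) (t : ℝ) : ℝ :=
  sSup {r | ∃ i j : Fin N, r = ‖S.v i t - S.v j t‖}

/-- generalized velocity diameters `D_n` -/
noncomputable def Dn (S : CS d N) (T : ℝ) (n : ℕ) : ℝ :=
  sSup {r | ∃ i j : Fin N, ∃ s ∈ Set.Icc ((n : ℝ) * T - S.τbar) ((n : ℝ) * T),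
    ∃ u ∈ Set.Icc ((n : ℝ) * T - S.τbar) ((n : ℝ) * T), r = ‖S.v i s - S.v j u‖}

/-- `C_0^V`, uniform bound of the initial velocities -/
noncomputable def C0V (S : CS d N) : ℝ :=
  sSup {r | ∃ j : Fin N, ∃ s ∈ Set.Icc (-S.τbar) 0, r = ‖S.v j s‖}

/-- `M_0^X` -/
noncomputable def M0X (S : CS d N) : ℝ :=
  sSup {r | ∃ l : Fin N, ∃ s ∈ Set.Icc (-S.τbar) 0, ∃ u ∈ Set.Icc (-S.τbar) 0,
    r = ‖S.x l s - S.x l u‖}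

/-- the auxiliary function `φ` -/
noncomputable def phi (S : CS d N) (t : ℝ) : ℝ :=
  sInf (S.ψ '' Set.Icc 0 (S.τbar * S.C0V + S.M0X + sSup (S.dX '' Set.Icc (-S.τbar) t)))

end CS
section Helpers
variable {d N : ℕ}

lemma psi_le_K (S : CS d N) (r : ℝ) : S.ψ r ≤ S.K :=
  le_csSup S.ψ_bdd ⟨r, rfl⟩

lemma K_pos (S : CS d N) : 0 < S.K :=
  lt_of_lt_of_le (S.ψ_pos 0) (psi_le_K S 0)

lemma alpha_nonneg (S : CS d N) {t : ℝ} (ht : 0 ≤ t) : 0 ≤ S.α t := (S.α_mem t ht).1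
lemma alpha_le_one (S : CS d N) {t : ℝ} (ht : 0 ≤ t) : S.α t ≤ 1 := (S.α_mem t ht).2
lemma tau_nonneg (S : CS d N) {t : ℝ} (ht : 0 ≤ t) : 0 ≤ S.τ t := (S.τ_mem t ht).1
lemma tau_le (S : CS d N) {t : ℝ} (ht : 0 ≤ t) : S.τ t ≤ S.τbar := (S.τ_mem t ht).2

lemma Ncast_pos (hN : 2 ≤ N) : (0:ℝ) < (N:ℝ) - 1 := by
  have : (2:ℝ) ≤ (N:ℝ) := by exact_mod_cast hN
  linarith

/-- derivative of the scalar product of a velocity with a fixed vector -/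
lemma hasDerivAt_inner_v (S : CS d N) (e : EuclideanSpace ℝ (Fin d)) (i : Fin N) {t : ℝ}
    (ht : 0 < t) :
    HasDerivAt (fun s => (⟪S.v i s, e⟫ : ℝ))
      (∑ j ∈ Finset.univ.erase i,
        (S.α t * (S.ψ ‖S.x i t - S.x j (t - S.τ t)‖ / ((N : ℝ) - 1))) *
          (⟪S.v j (t - S.τ t), e⟫ - ⟪S.v i t, e⟫)) t := by
  have hv := S.v_deriv i t ht
  have h := hv.inner ℝ (hasDerivAt_const t e)
  simp only [inner_zero_right, zero_add, add_zero, sum_inner, real_inner_smul_left,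
    inner_sub_left] at h
  exact h

end Helpers
section Invariance
variable {d N : ℕ}

lemma invariance (S : CS d N) (hN : 2 ≤ N) (e : EuclideanSpace ℝ (Fin d)) (t₀ B : ℝ)
    (ht₀ : 0 ≤ t₀)
    (hB : ∀ k : Fin N, ∀ u ∈ Set.Icc (t₀ - S.τbar) t₀, (⟪S.v k u, e⟫ : ℝ) ≤ B) :
    ∀ k : Fin N, ∀ u, t₀ - S.τbar ≤ u → (⟪S.v k u, e⟫ : ℝ) ≤ B := by
  have hNc : (0:ℝ) < (N:ℝ) - 1 := Ncast_pos hN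
  have key : ∀ ε, 0 < ε → ∀ u, t₀ ≤ u → ∀ k : Fin N,
      (⟪S.v k u, e⟫ : ℝ) ≤ B + ε * (1 + (u - t₀)) := by
    intro ε hε
    by_contra hcon
    push_neg at hcon
    obtain ⟨u1, hu1, k1, hk1⟩ := hcon
    set Sset : Set ℝ :=
      {u | t₀ ≤ u ∧ ∃ k : Fin N, B + ε * (1 + (u - t₀)) ≤ ⟪S.v k u, e⟫} with hSset
    have hne : Sset.Nonempty := ⟨u1, hu1, k1, le_of_lt hk1⟩
    have hbdd : BddBelow Sset := ⟨t₀, fun u hu => hu.1⟩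
    have hclosed : IsClosed Sset := by
      have hrw : Sset = Set.Ici t₀ ∩
          (⋃ k : Fin N, {u | B + ε * (1 + (u - t₀)) ≤ ⟪S.v k u, e⟫}) := by
        ext u
        constructor
        · rintro ⟨h1, k, h2⟩; exact ⟨h1, Set.mem_iUnion.mpr ⟨k, h2⟩⟩
        · rintro ⟨h1, h2⟩
          obtain ⟨k, hk2⟩ := Set.mem_iUnion.mp h2
          exact ⟨h1, k, hk2⟩
      rw [hrw]
      refine isClosed_Ici.inter (isClosed_iUnion_of_finite fun k => ?_)
      refine isClosed_le ?_ ((S.v_cont k).inner continuous_const)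
      exact continuous_const.add (continuous_const.mul
        (continuous_const.add ((continuous_id.sub continuous_const))))
    set ustar := sInf Sset with hustar_def
    have hustar : ustar ∈ Sset := hclosed.csInf_mem hne hbdd
    obtain ⟨hu_t₀, k, hk⟩ := hustar
    have hlt : t₀ < ustar := by
      rcases eq_or_lt_of_le hu_t₀ with h | h
      · exfalso
        have h1 := hB k t₀ ⟨by linarith [S.τbar_nonneg], le_refl t₀⟩
        rw [← h] at hk
        nlinarith
      · exact h
    have hpos0 : 0 < ustar := lt_of_le_of_lt ht₀ hlt
    have hall : ∀ k' : Fin N, (⟪S.v k' ustar, e⟫ : ℝ) ≤ B + ε * (1 + (ustar - t₀)) := by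
      intro k'
      by_contra hgt
      push_neg at hgt
      have hopen : IsOpen {u | B + ε * (1 + (u - t₀)) < ⟪S.v k' u, e⟫} := by
        refine isOpen_lt ?_ ((S.v_cont k').inner continuous_const)
        exact continuous_const.add (continuous_const.mul
          (continuous_const.add ((continuous_id.sub continuous_const))))
      obtain ⟨δ, hδ, hball⟩ := Metric.isOpen_iff.mp hopen ustar hgt
      set u' := max t₀ (ustar - δ/2) with hu'
      have h1 : u' < ustar := max_lt hlt (by linarith)
      have h2 : u' ∈ Metric.ball ustar δ := by
        rw [Metric.mem_ball, Real.dist_eq, abs_lt]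
        constructor
        · have : ustar - δ/2 ≤ u' := le_max_right _ _
          linarith
        · linarith
      have hmem : u' ∈ Sset := ⟨le_max_left _ _, k', le_of_lt (hball h2)⟩
      have := csInf_le hbdd hmem
      linarith
    have hwin : ∀ k' : Fin N, ∀ w, t₀ - S.τbar ≤ w → w ≤ ustar →
        (⟪S.v k' w, e⟫ : ℝ) ≤ B + ε * (1 + (ustar - t₀)) := by
      intro k' w hw1 hw2
      rcases le_or_gt w t₀ with h | h
      · exact le_trans (hB k' w ⟨hw1, h⟩) (by nlinarith)
      · rcases eq_or_lt_of_le hw2 with rfl | hlt2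
        · exact hall k'
        · have hnot : w ∉ Sset := fun hmem => absurd (csInf_le hbdd hmem) (by linarith)
          rw [hSset] at hnot
          simp only [Set.mem_setOf_eq, not_and, not_exists, not_le] at hnot
          have := hnot (le_of_lt h) k'
          nlinarith
    have hD := hasDerivAt_inner_v S e k hpos0
    set D := ∑ j ∈ Finset.univ.erase k,
        (S.α ustar * (S.ψ ‖S.x k ustar - S.x j (ustar - S.τ ustar)‖ / ((N : ℝ) - 1))) *
          (⟪S.v j (ustar - S.τ ustar), e⟫ - ⟪S.v k ustar, e⟫) with hDdef
    have hσ1 : t₀ - S.τbar ≤ ustar - S.τ ustar := by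
      have := tau_le S (le_of_lt hpos0); linarith
    have hσ2 : ustar - S.τ ustar ≤ ustar := by
      have := tau_nonneg S (le_of_lt hpos0); linarith
    have hDle : D ≤ 0 := by
      rw [hDdef]
      apply Finset.sum_nonpos
      intro j hj
      have hc : 0 ≤ S.α ustar * (S.ψ ‖S.x k ustar - S.x j (ustar - S.τ ustar)‖ / ((N : ℝ) - 1)) :=
        mul_nonneg (alpha_nonneg S (le_of_lt hpos0))
          (div_nonneg (S.ψ_pos _).le (le_of_lt hNc))
      have hx : (⟪S.v j (ustar - S.τ ustar), e⟫ : ℝ) - ⟪S.v k ustar, e⟫ ≤ 0 := by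
        have h1 := hwin j (ustar - S.τ ustar) hσ1 hσ2
        linarith [hk]
      exact mul_nonpos_of_nonneg_of_nonpos hc hx
    have hslope : ε ≤ D := by
      have ht := hasDerivAt_iff_tendsto_slope.mp hD
      have ht' : Filter.Tendsto (slope (fun s => (⟪S.v k s, e⟫ : ℝ)) ustar)
          (nhdsWithin ustar (Set.Iio ustar)) (nhds D) :=
        ht.mono_left (nhdsWithin_mono _ (fun x hx => ne_of_lt hx))
      refine ge_of_tendsto ht' ?_
      filter_upwards [Ioo_mem_nhdsLT hlt] with w hw
      have hw1 : w ∉ Sset := fun hmem => absurd (csInf_le hbdd hmem) (by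
        have := hw.2; linarith)
      rw [hSset] at hw1
      simp only [Set.mem_setOf_eq, not_and, not_exists, not_le] at hw1
      have hfw := hw1 (le_of_lt hw.1) k
      have hnum : ε * (ustar - w) ≤ (⟪S.v k ustar, e⟫ : ℝ) - ⟪S.v k w, e⟫ := by nlinarith [hk]
      rw [slope_def_field, le_div_iff_of_neg (by linarith [hw.2] : w - ustar < 0)]
      linarith
    linarith
  intro k u hu
  rcases le_or_gt u t₀ with h | h
  · exact hB k u ⟨hu, h⟩
  · by_contra hgt
    push_neg at hgt
    set ε := ((⟪S.v k u, e⟫ : ℝ) - B) / (2 * (1 + (u - t₀))) with hεdef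
    have hd : (0:ℝ) < 1 + (u - t₀) := by linarith
    have hε : 0 < ε := div_pos (by linarith) (by linarith)
    have := key ε hε u (le_of_lt h) k
    rw [hεdef] at this
    have h2 : ((⟪S.v k u, e⟫ : ℝ) - B) / (2 * (1 + (u - t₀))) * (1 + (u - t₀))
        = ((⟪S.v k u, e⟫ : ℝ) - B) / 2 := by
      field_simp
    nlinarith

end Invariance
section Bounds
variable {d N : ℕ}

lemma C0V_nonneg (S : CS d N) : 0 ≤ S.C0V := by
  apply Real.sSup_nonneg
  rintro x ⟨j, s, hs, rfl⟩
  exact norm_nonneg _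

lemma M0X_nonneg (S : CS d N) : 0 ≤ S.M0X := by
  apply Real.sSup_nonneg
  rintro x ⟨l, s, hs, u, hu, rfl⟩
  exact norm_nonneg _

lemma dX_nonneg (S : CS d N) (t : ℝ) : 0 ≤ S.dX t := by
  apply Real.sSup_nonneg
  rintro x ⟨i, j, rfl⟩
  exact norm_nonneg _

lemma C0V_bddAbove (S : CS d N) (hN : 2 ≤ N) :
    BddAbove {r | ∃ j : Fin N, ∃ s ∈ Set.Icc (-S.τbar) 0, r = ‖S.v j s‖} := by
  haveI : Nonempty (Fin N) := ⟨⟨0, by omega⟩⟩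
  have h : ∀ j : Fin N, ∃ Cj : ℝ, ∀ s ∈ Set.Icc (-S.τbar) 0, ‖S.v j s‖ ≤ Cj := by
    intro j
    obtain ⟨C, hC⟩ := (isCompact_Icc.image (S.v_cont j).norm).bddAbove
    exact ⟨C, fun s hs => hC ⟨s, hs, rfl⟩⟩
  choose C hC using h
  refine ⟨Finset.univ.sup' Finset.univ_nonempty C, ?_⟩
  rintro r ⟨j, s, hs, rfl⟩
  exact le_trans (hC j s hs) (Finset.le_sup' C (Finset.mem_univ j))

lemma vel_bound (S : CS d N) (hN : 2 ≤ N) {u : ℝ} (hu : -S.τbar ≤ u) (j : Fin N) :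
    ‖S.v j u‖ ≤ S.C0V := by
  have hbdd := C0V_bddAbove S hN
  have hmem0 : ∀ (k : Fin N) (s : ℝ), s ∈ Set.Icc (-S.τbar) 0 → ‖S.v k s‖ ≤ S.C0V :=
    fun k s hs => le_csSup hbdd ⟨k, s, hs, rfl⟩
  rcases le_or_gt u 0 with h | h
  · exact hmem0 j u ⟨hu, h⟩
  · by_cases h0 : S.v j u = 0
    · rw [h0, norm_zero]; exact C0V_nonneg S
    · set w := S.v j u with hw
      set e := ‖w‖⁻¹ • w with he
      have hB : ∀ k : Fin N, ∀ s ∈ Set.Icc (0 - S.τbar) 0, (⟪S.v k s, e⟫ : ℝ) ≤ S.C0V := by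
        intro k s hs
        have h1 : (⟪S.v k s, e⟫ : ℝ) ≤ ‖S.v k s‖ * ‖e‖ := real_inner_le_norm _ _
        have h2 : ‖e‖ = 1 := by rw [he]; exact norm_smul_inv_norm h0
        rw [h2, mul_one] at h1
        exact le_trans h1 (hmem0 k s (by simpa using hs))
      have hfin := invariance S hN e 0 S.C0V le_rfl hB j u (by linarith)
      have heq : (⟪S.v j u, e⟫ : ℝ) = ‖w‖ := by
        rw [he, ← hw, real_inner_smul_right, real_inner_self_eq_norm_mul_norm]
        have : ‖w‖ ≠ 0 := norm_ne_zero_iff.mpr h0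
        field_simp
      rw [heq] at hfin
      exact hfin

lemma x_diff (S : CS d N) (hN : 2 ≤ N) (j : Fin N) {a b : ℝ} (ha : 0 ≤ a) (hab : a ≤ b) :
    ‖S.x j b - S.x j a‖ ≤ (b - a) * S.C0V := by
  have hftc : ∫ t in a..b, S.v j t = S.x j b - S.x j a := by
    apply intervalIntegral.integral_eq_sub_of_hasDeriv_right_of_le hab
      ((S.x_cont j).continuousOn)
      (fun t htt => (S.x_deriv j t (lt_of_le_of_lt ha htt.1)).hasDerivWithinAt)
      ((S.v_cont j).intervalIntegrable a b)
  rw [← hftc]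
  have hmin : a ⊓ b = a := min_eq_left hab
  calc ‖∫ t in a..b, S.v j t‖ ≤ S.C0V * |b - a| := by
        apply intervalIntegral.norm_integral_le_of_norm_le_const
        intro t htt
        have ht1 : a < t := by rw [Set.uIoc_of_le hab] at htt; exact htt.1
        exact vel_bound S hN (by linarith [S.τbar_nonneg]) j
    _ = (b - a) * S.C0V := by rw [abs_of_nonneg (by linarith)]; ring

lemma bddAbove_dX_image (S : CS d N) (a b : ℝ) : BddAbove (S.dX '' Set.Icc a b) := by
  set g : ℝ → ℝ := fun t => ∑ j : Fin N, ‖S.x j t‖ with hg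
  have hgc : Continuous g := continuous_finset_sum _ (fun j _ => (S.x_cont j).norm)
  obtain ⟨C, hC⟩ := (isCompact_Icc.image hgc).bddAbove
  refine ⟨2 * C, ?_⟩
  rintro y ⟨t, ht, rfl⟩
  have hgt : ∀ i : Fin N, ‖S.x i t‖ ≤ g t :=
    fun i => Finset.single_le_sum (f := fun k : Fin N => ‖S.x k t‖) (fun k _ => norm_nonneg _) (Finset.mem_univ i)
  have h2 : g t ≤ C := hC ⟨t, ht, rfl⟩
  have hg0 : 0 ≤ g t := Finset.sum_nonneg (fun k _ => norm_nonneg _)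
  apply Real.sSup_le
  · rintro r ⟨i, j, rfl⟩
    calc ‖S.x i t - S.x j t‖ ≤ ‖S.x i t‖ + ‖S.x j t‖ := norm_sub_le _ _
      _ ≤ 2 * C := by have := hgt i; have := hgt j; linarith
  · linarith

lemma b_lower (S : CS d N) (hN : 2 ≤ N) {s tN : ℝ} (hs1 : S.τbar ≤ s) (hs2 : s ≤ tN)
    (i j : Fin N) : S.phi tN ≤ S.ψ ‖S.x i s - S.x j (s - S.τ s)‖ := by
  have hs0 : 0 ≤ s := le_trans S.τbar_nonneg hs1
  have hσ0 : 0 ≤ s - S.τ s := by have := tau_le S hs0; linarith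
  have hσs : s - S.τ s ≤ s := by have := tau_nonneg S hs0; linarith
  have h1 : ‖S.x j s - S.x j (s - S.τ s)‖ ≤ S.τbar * S.C0V := by
    calc ‖S.x j s - S.x j (s - S.τ s)‖ ≤ (s - (s - S.τ s)) * S.C0V := x_diff S hN j hσ0 hσs
      _ = S.τ s * S.C0V := by ring_nf
      _ ≤ S.τbar * S.C0V := mul_le_mul_of_nonneg_right (tau_le S hs0) (C0V_nonneg S)
  have h2 : ‖S.x i s - S.x j s‖ ≤ S.dX s := by
    rw [CS.dX]
    apply le_csSup ?_ (Set.mem_setOf_eq ▸ ⟨i, j, rfl⟩)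
    have hset : {r | ∃ i j : Fin N, r = ‖S.x i s - S.x j s‖} =
        Set.range (fun p : Fin N × Fin N => ‖S.x p.1 s - S.x p.2 s‖) := by
      ext r
      constructor
      · rintro ⟨i, j, rfl⟩; exact ⟨(i, j), rfl⟩
      · rintro ⟨⟨i, j⟩, rfl⟩; exact ⟨i, j, rfl⟩
    rw [hset]
    exact (Set.finite_range _).bddAbove
  have h3 : S.dX s ≤ sSup (S.dX '' Set.Icc (-S.τbar) tN) :=
    le_csSup (bddAbove_dX_image S _ _) ⟨s, ⟨by linarith [S.τbar_nonneg], hs2⟩, rfl⟩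
  have htri := dist_triangle (S.x i s) (S.x j s) (S.x j (s - S.τ s))
  rw [dist_eq_norm, dist_eq_norm, dist_eq_norm] at htri
  have hrR : ‖S.x i s - S.x j (s - S.τ s)‖ ≤
      S.τbar * S.C0V + S.M0X + sSup (S.dX '' Set.Icc (-S.τbar) tN) := by
    have := M0X_nonneg S
    linarith
  apply csInf_le
  · refine ⟨0, ?_⟩
    rintro y ⟨r, _, rfl⟩
    exact (S.ψ_pos r).le
  · exact ⟨_, ⟨norm_nonneg _, hrR⟩, rfl⟩

lemma phi_pos (S : CS d N) (tN : ℝ) : 0 < S.phi tN := by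
  have hR0 : 0 ≤ S.τbar * S.C0V + S.M0X + sSup (S.dX '' Set.Icc (-S.τbar) tN) := by
    have h1 : 0 ≤ sSup (S.dX '' Set.Icc (-S.τbar) tN) := by
      apply Real.sSup_nonneg
      rintro y ⟨t, _, rfl⟩
      exact dX_nonneg S t
    have h2 := mul_nonneg S.τbar_nonneg (C0V_nonneg S)
    have h3 := M0X_nonneg S
    linarith
  have hcomp : IsCompact (S.ψ '' Set.Icc 0
      (S.τbar * S.C0V + S.M0X + sSup (S.dX '' Set.Icc (-S.τbar) tN))) :=
    isCompact_Icc.image S.ψ_cont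
  have hne : (S.ψ '' Set.Icc 0
      (S.τbar * S.C0V + S.M0X + sSup (S.dX '' Set.Icc (-S.τbar) tN))).Nonempty :=
    ⟨S.ψ 0, ⟨0, ⟨le_rfl, hR0⟩, rfl⟩⟩
  obtain ⟨r, _, hr⟩ := hcomp.sInf_mem hne
  rw [CS.phi, ← hr]
  exact S.ψ_pos r

end Bounds
section FTC
variable {d N : ℕ}

lemma intInt_alpha_mul (S : CS d N) {H : ℝ → ℝ} (hH : Continuous H) {t1 t2 : ℝ}
    (h0 : 0 ≤ t1) (h12 : t1 ≤ t2) :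
    IntervalIntegrable (fun s => S.α s * H s) MeasureTheory.volume t1 t2 := by
  rw [intervalIntegrable_iff_integrableOn_Ioc_of_le h12]
  apply MeasureTheory.Integrable.mono'
    (g := fun s => |H s|) ((hH.abs.integrableOn_Icc).mono_set Set.Ioc_subset_Icc_self)
    (((S.α_meas.mul hH.measurable).aestronglyMeasurable).restrict)
  rw [MeasureTheory.ae_restrict_iff' measurableSet_Ioc]
  filter_upwards with a ha
  have ha0 : 0 ≤ a := le_trans h0 (le_of_lt ha.1)
  rw [Real.norm_eq_abs, Pi.mul_apply, abs_mul]
  calc |S.α a| * |H a| ≤ 1 * |H a| := by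
        apply mul_le_mul_of_nonneg_right _ (abs_nonneg _)
        rw [abs_of_nonneg (alpha_nonneg S ha0)]
        exact alpha_le_one S ha0
    _ = |H a| := one_mul _

lemma cont_delay (S : CS d N) (j : Fin N) : Continuous fun s => S.x j (s - S.τ s) :=
  (S.x_cont j).comp (continuous_id.sub S.τ_cont)

lemma cont_vdelay (S : CS d N) (e : EuclideanSpace ℝ (Fin d)) (j : Fin N) :
    Continuous fun s => (⟪S.v j (s - S.τ s), e⟫ : ℝ) :=
  ((S.v_cont j).comp (continuous_id.sub S.τ_cont)).inner continuous_const

lemma sum_b_le (S : CS d N) (hN : 2 ≤ N) (i : Fin N) (s : ℝ) :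
    ∑ j ∈ Finset.univ.erase i, S.ψ ‖S.x i s - S.x j (s - S.τ s)‖ / ((N : ℝ) - 1) ≤ S.K := by
  have hNc := Ncast_pos hN
  have hcard : ((Finset.univ.erase i).card : ℝ) = (N : ℝ) - 1 := by
    rw [Finset.card_erase_of_mem (Finset.mem_univ i), Finset.card_univ, Fintype.card_fin]
    have : 1 ≤ N := by omega
    push_cast [Nat.cast_sub this]
    ring
  calc ∑ j ∈ Finset.univ.erase i, S.ψ ‖S.x i s - S.x j (s - S.τ s)‖ / ((N : ℝ) - 1)
      ≤ ∑ _j ∈ Finset.univ.erase i, S.K / ((N : ℝ) - 1) := by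
        apply Finset.sum_le_sum
        intro j _
        exact (div_le_div_iff_of_pos_right hNc).mpr (psi_le_K S _)
    _ = S.K := by
        rw [Finset.sum_const, nsmul_eq_mul, hcard]
        field_simp

lemma sum_helper2 {ι : Type*} (t : Finset ι) (a c : ℝ) (b x : ι → ℝ) :
    ∑ j ∈ t, (a * b j) * (x j - c) = a * ∑ j ∈ t, b j * (x j - c) := by
  rw [Finset.mul_sum]
  exact Finset.sum_congr rfl fun j _ => by ring

lemma sum_helper3 {ι : Type*} (t : Finset ι) (c M : ℝ) (b x : ι → ℝ) :
    (∑ j ∈ t, b j * (x j - c)) + ∑ j ∈ t, b j * (M - x j) = (∑ j ∈ t, b j) * (M - c) := by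
  rw [← Finset.sum_add_distrib, Finset.sum_mul]
  exact Finset.sum_congr rfl fun j _ => by ring

lemma ftc_ineq (S : CS d N) (hN : 2 ≤ N) (e : EuclideanSpace ℝ (Fin d)) (t₀ M : ℝ)
    (ht₀ : 0 ≤ t₀)
    (hM : ∀ k : Fin N, ∀ u, t₀ - S.τbar ≤ u → (⟪S.v k u, e⟫ : ℝ) ≤ M)
    (i : Fin N) {t1 t2 : ℝ} (h01 : t₀ ≤ t1) (h12 : t1 ≤ t2) :
    Real.exp (S.K * t1) * (M - ⟪S.v i t1, e⟫) +
      ∫ s in t1..t2, Real.exp (S.K * s) * S.α s *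
        (∑ k ∈ Finset.univ.erase i, S.ψ ‖S.x i s - S.x k (s - S.τ s)‖ / ((N : ℝ) - 1) *
          (M - ⟪S.v k (s - S.τ s), e⟫))
      ≤ Real.exp (S.K * t2) * (M - ⟪S.v i t2, e⟫) := by
  have hNc := Ncast_pos hN
  have h0 : 0 ≤ t1 := le_trans ht₀ h01
  set g : ℝ → ℝ := fun s => Real.exp (S.K * s) * (M - ⟪S.v i s, e⟫) with hg
  set gd : ℝ → ℝ := fun s => Real.exp (S.K * s) * (S.K * (M - ⟪S.v i s, e⟫) -
      ∑ j ∈ Finset.univ.erase i,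
        (S.α s * (S.ψ ‖S.x i s - S.x j (s - S.τ s)‖ / ((N : ℝ) - 1))) *
          (⟪S.v j (s - S.τ s), e⟫ - ⟪S.v i s, e⟫)) with hgd
  have hcont : ContinuousOn g (Set.Icc t1 t2) :=
    ((Real.continuous_exp.comp (continuous_const.mul continuous_id)).mul
      (continuous_const.sub ((S.v_cont i).inner continuous_const))).continuousOn
  have hderiv : ∀ s ∈ Set.Ioo t1 t2, HasDerivWithinAt g (gd s) (Set.Ioi s) s := by
    intro s hs
    have hs0 : 0 < s := lt_of_le_of_lt h0 hs.1
    have h1 : HasDerivAt (fun u => Real.exp (S.K * u)) (Real.exp (S.K * s) * S.K) s := by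
      have := ((hasDerivAt_id s).const_mul S.K).exp
      simpa [mul_comm] using this
    have h2 := hasDerivAt_inner_v S e i hs0
    have h3 := (hasDerivAt_const s M).sub h2
    have h4 := h1.mul h3
    have h5 : HasDerivAt g (gd s) s := by
      exact h4.congr_deriv (by simp only [hgd, Pi.sub_apply]; ring)
    exact h5.hasDerivWithinAt
  -- continuous auxiliary functions
  set H1 : ℝ → ℝ := fun s => ∑ j ∈ Finset.univ.erase i,
      S.ψ ‖S.x i s - S.x j (s - S.τ s)‖ / ((N : ℝ) - 1) *
        (⟪S.v j (s - S.τ s), e⟫ - ⟪S.v i s, e⟫) with hH1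
  set H2 : ℝ → ℝ := fun s => ∑ j ∈ Finset.univ.erase i,
      S.ψ ‖S.x i s - S.x j (s - S.τ s)‖ / ((N : ℝ) - 1) *
        (M - ⟪S.v j (s - S.τ s), e⟫) with hH2
  have hH1c : Continuous H1 := by
    apply continuous_finset_sum
    intro j _
    exact (((S.ψ_cont.comp (((S.x_cont i).sub (cont_delay S j)).norm)).div_const _)).mul
      ((cont_vdelay S e j).sub ((S.v_cont i).inner continuous_const))
  have hH2c : Continuous H2 := by
    apply continuous_finset_sum
    intro j _
    exact (((S.ψ_cont.comp (((S.x_cont i).sub (cont_delay S j)).norm)).div_const _)).mul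
      (continuous_const.sub (cont_vdelay S e j))
  have hgd_eq : gd = fun s => Real.exp (S.K * s) * (S.K * (M - ⟪S.v i s, e⟫)) -
      S.α s * (Real.exp (S.K * s) * H1 s) := by
    funext s
    simp only [hgd, hH1]
    rw [sum_helper2]
    ring
  have hint_gd : IntervalIntegrable gd MeasureTheory.volume t1 t2 := by
    rw [hgd_eq]
    exact ((Real.continuous_exp.comp (continuous_const.mul continuous_id)).mul
      (continuous_const.mul (continuous_const.sub ((S.v_cont i).inner
        continuous_const)))).intervalIntegrable t1 t2 |>.sub
      (intInt_alpha_mul S ((Real.continuous_exp.comp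
        (continuous_const.mul continuous_id)).mul hH1c) h0 h12)
  have hlow_eq : (fun s => Real.exp (S.K * s) * S.α s * H2 s) =
      fun s => S.α s * (Real.exp (S.K * s) * H2 s) := by
    funext s; ring
  have hint_low : IntervalIntegrable (fun s => Real.exp (S.K * s) * S.α s * H2 s)
      MeasureTheory.volume t1 t2 := by
    rw [hlow_eq]
    exact intInt_alpha_mul S ((Real.continuous_exp.comp
      (continuous_const.mul continuous_id)).mul hH2c) h0 h12
  have hkey : ∫ s in t1..t2, gd s = g t2 - g t1 :=
    intervalIntegral.integral_eq_sub_of_hasDeriv_right_of_le h12 hcont hderiv hint_gd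
  have hpt : ∀ s ∈ Set.Icc t1 t2,
      Real.exp (S.K * s) * S.α s * H2 s ≤ gd s := by
    intro s hs
    have hs0 : 0 ≤ s := le_trans h0 hs.1
    have hMf : ⟪S.v i s, e⟫ ≤ M := by
      refine hM i s ?_
      have h1 := S.τbar_nonneg
      have h2 := hs.1
      linarith
    have hlam : S.α s * (∑ j ∈ Finset.univ.erase i,
        S.ψ ‖S.x i s - S.x j (s - S.τ s)‖ / ((N : ℝ) - 1)) ≤ S.K := by
      have hb := sum_b_le S hN i s
      have hb0 : 0 ≤ ∑ j ∈ Finset.univ.erase i,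
          S.ψ ‖S.x i s - S.x j (s - S.τ s)‖ / ((N : ℝ) - 1) :=
        Finset.sum_nonneg fun j _ => div_nonneg (S.ψ_pos _).le hNc.le
      calc S.α s * (∑ j ∈ Finset.univ.erase i,
            S.ψ ‖S.x i s - S.x j (s - S.τ s)‖ / ((N : ℝ) - 1))
          ≤ 1 * (∑ j ∈ Finset.univ.erase i,
            S.ψ ‖S.x i s - S.x j (s - S.τ s)‖ / ((N : ℝ) - 1)) :=
            mul_le_mul_of_nonneg_right (alpha_le_one S hs0) hb0
        _ ≤ S.K := by rw [one_mul]; exact hb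
    simp only [hgd, hH2]
    have h1 := sum_helper2 (Finset.univ.erase i) (S.α s) (⟪S.v i s, e⟫)
      (fun j => S.ψ ‖S.x i s - S.x j (s - S.τ s)‖ / ((N : ℝ) - 1))
      (fun j => (⟪S.v j (s - S.τ s), e⟫ : ℝ))
    have h2 := sum_helper3 (Finset.univ.erase i) (⟪S.v i s, e⟫ : ℝ) M
      (fun j => S.ψ ‖S.x i s - S.x j (s - S.τ s)‖ / ((N : ℝ) - 1))
      (fun j => (⟪S.v j (s - S.τ s), e⟫ : ℝ))
    rw [h1]
    have h3 : Real.exp (S.K * s) * S.α s *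
        ((∑ j ∈ Finset.univ.erase i, S.ψ ‖S.x i s - S.x j (s - S.τ s)‖ / ((N : ℝ) - 1) *
          (⟪S.v j (s - S.τ s), e⟫ - ⟪S.v i s, e⟫)) +
         ∑ j ∈ Finset.univ.erase i, S.ψ ‖S.x i s - S.x j (s - S.τ s)‖ / ((N : ℝ) - 1) *
          (M - ⟪S.v j (s - S.τ s), e⟫)) = Real.exp (S.K * s) * S.α s *
        ((∑ j ∈ Finset.univ.erase i, S.ψ ‖S.x i s - S.x j (s - S.τ s)‖ / ((N : ℝ) - 1)) *
          (M - ⟪S.v i s, e⟫)) := by rw [h2]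
    nlinarith [mul_nonneg (Real.exp_pos (S.K * s)).le
      (mul_nonneg (sub_nonneg.mpr hlam) (sub_nonneg.mpr hMf)), Real.exp_pos (S.K * s),
      (Real.exp_pos (S.K * s)).le, mul_nonneg (alpha_nonneg S hs0) (sub_nonneg.mpr hMf)]
  have hmono := intervalIntegral.integral_mono_on h12 hint_low hint_gd hpt
  rw [hkey] at hmono
  have hfin : g t1 + ∫ s in t1..t2, Real.exp (S.K * s) * S.α s * H2 s ≤ g t2 := by
    linarith
  exact hfin

end FTC
section Pers
variable {d N : ℕ}

lemma pers (S : CS d N) (hN : 2 ≤ N) (e : EuclideanSpace ℝ (Fin d)) (t₀ M : ℝ)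
    (ht₀ : 0 ≤ t₀)
    (hM : ∀ k : Fin N, ∀ u, t₀ - S.τbar ≤ u → (⟪S.v k u, e⟫ : ℝ) ≤ M)
    (i : Fin N) {t1 t2 : ℝ} (h01 : t₀ ≤ t1) (h12 : t1 ≤ t2) :
    Real.exp (S.K * t1) * (M - ⟪S.v i t1, e⟫) ≤
      Real.exp (S.K * t2) * (M - ⟪S.v i t2, e⟫) := by
  have h := ftc_ineq S hN e t₀ M ht₀ hM i h01 h12
  have hnn : 0 ≤ ∫ s in t1..t2, Real.exp (S.K * s) * S.α s *
      (∑ k ∈ Finset.univ.erase i, S.ψ ‖S.x i s - S.x k (s - S.τ s)‖ / ((N : ℝ) - 1) *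
        (M - ⟪S.v k (s - S.τ s), e⟫)) := by
    apply intervalIntegral.integral_nonneg h12
    intro s hs
    have hs0 : 0 ≤ s := le_trans (le_trans ht₀ h01) hs.1
    apply mul_nonneg (mul_nonneg (Real.exp_pos _).le (alpha_nonneg S hs0))
    apply Finset.sum_nonneg
    intro k _
    apply mul_nonneg (div_nonneg (S.ψ_pos _).le (Ncast_pos hN).le)
    have hσ : t₀ - S.τbar ≤ s - S.τ s := by
      have h1 := tau_le S hs0
      have h2 := hs.1
      linarith
    exact sub_nonneg.mpr (hM k _ hσ)
  linarith

lemma exp_shift {K a b x y : ℝ} (h : Real.exp (K * a) * x ≤ Real.exp (K * b) * y) :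
    Real.exp (K * (a - b)) * x ≤ y := by
  have hp := Real.exp_pos (-(K * b))
  calc Real.exp (K * (a - b)) * x = Real.exp (-(K * b)) * (Real.exp (K * a) * x) := by
        rw [← mul_assoc, ← Real.exp_add]; ring_nf
    _ ≤ Real.exp (-(K * b)) * (Real.exp (K * b) * y) := mul_le_mul_of_nonneg_left h hp.le
    _ = y := by rw [← mul_assoc, ← Real.exp_add]; simp

lemma exists_max_window (S : CS d N) (hN : 2 ≤ N) (e : EuclideanSpace ℝ (Fin d))
    {a b : ℝ} (hab : a ≤ b) :
    ∃ k₀ : Fin N, ∃ σ₀ ∈ Set.Icc a b, ∀ k : Fin N, ∀ w ∈ Set.Icc a b,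
      (⟪S.v k w, e⟫ : ℝ) ≤ ⟪S.v k₀ σ₀, e⟫ := by
  haveI : Nonempty (Fin N) := ⟨⟨0, by omega⟩⟩
  have hper : ∀ k : Fin N, ∃ σ ∈ Set.Icc a b, ∀ w ∈ Set.Icc a b,
      (⟪S.v k w, e⟫ : ℝ) ≤ ⟪S.v k σ, e⟫ := by
    intro k
    have hc : Continuous (fun w => (⟪S.v k w, e⟫ : ℝ)) := (S.v_cont k).inner continuous_const
    obtain ⟨σ, hσ, hmax⟩ := (isCompact_Icc : IsCompact (Set.Icc a b)).exists_isMaxOn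
      (Set.nonempty_Icc.mpr hab) hc.continuousOn
    exact ⟨σ, hσ, fun w hw => hmax hw⟩
  choose σ hσ hmax using hper
  obtain ⟨k₀, _, hk₀⟩ := Finset.exists_max_image Finset.univ
    (fun k => (⟪S.v k (σ k), e⟫ : ℝ)) ⟨Classical.arbitrary _, Finset.mem_univ _⟩
  exact ⟨k₀, σ k₀, hσ k₀, fun k w hw => le_trans (hmax k w hw) (hk₀ k (Finset.mem_univ k))⟩

end Pers
section AuxInt
variable {d N : ℕ}

/-- integrability of the lower integrand appearing in `ftc_ineq` -/
lemma intInt_low (S : CS d N) (e : EuclideanSpace ℝ (Fin d)) (M : ℝ) (i : Fin N)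
    {t1 t2 : ℝ} (h0 : 0 ≤ t1) (h12 : t1 ≤ t2) :
    IntervalIntegrable (fun s => Real.exp (S.K * s) * S.α s *
      (∑ k ∈ Finset.univ.erase i, S.ψ ‖S.x i s - S.x k (s - S.τ s)‖ / ((N : ℝ) - 1) *
        (M - ⟪S.v k (s - S.τ s), e⟫))) MeasureTheory.volume t1 t2 := by
  have hH2c : Continuous (fun s => ∑ k ∈ Finset.univ.erase i,
      S.ψ ‖S.x i s - S.x k (s - S.τ s)‖ / ((N : ℝ) - 1) *
        (M - ⟪S.v k (s - S.τ s), e⟫)) := by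
    apply continuous_finset_sum
    intro k _
    exact (((S.ψ_cont.comp (((S.x_cont i).sub (cont_delay S k)).norm)).div_const _)).mul
      (continuous_const.sub (cont_vdelay S e k))
  have heq : (fun s => Real.exp (S.K * s) * S.α s *
      (∑ k ∈ Finset.univ.erase i, S.ψ ‖S.x i s - S.x k (s - S.τ s)‖ / ((N : ℝ) - 1) *
        (M - ⟪S.v k (s - S.τ s), e⟫))) =
      fun s => S.α s * (Real.exp (S.K * s) * (∑ k ∈ Finset.univ.erase i,
        S.ψ ‖S.x i s - S.x k (s - S.τ s)‖ / ((N : ℝ) - 1) *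
          (M - ⟪S.v k (s - S.τ s), e⟫))) := by
    funext s; ring
  rw [heq]
  exact intInt_alpha_mul S ((Real.continuous_exp.comp
    (continuous_const.mul continuous_id)).mul hH2c) h0 h12

lemma intInt_expalpha (S : CS d N) {t1 t2 : ℝ} (h0 : 0 ≤ t1) (h12 : t1 ≤ t2) (c : ℝ) :
    IntervalIntegrable (fun s => c * S.α s) MeasureTheory.volume t1 t2 := by
  have heq : (fun s => c * S.α s) = fun s => S.α s * c := by funext s; ring
  rw [heq]
  exact intInt_alpha_mul S continuous_const h0 h12

lemma intInt_expalpha' (S : CS d N) {t1 t2 : ℝ} (h0 : 0 ≤ t1) (h12 : t1 ≤ t2) :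
    IntervalIntegrable (fun s => Real.exp (S.K * s) * S.α s) MeasureTheory.volume t1 t2 := by
  have heq : (fun s => Real.exp (S.K * s) * S.α s) =
      fun s => S.α s * Real.exp (S.K * s) := by funext s; ring
  rw [heq]
  exact intInt_alpha_mul S (Real.continuous_exp.comp (continuous_const.mul continuous_id))
    h0 h12

end AuxInt
set_option maxHeartbeats 1000000
section Gain
variable {d N : ℕ}

lemma gain (S : CS d N) (hN : 2 ≤ N) (e : EuclideanSpace ℝ (Fin d)) {ν T αt : ℝ}
    (hT : 0 < T) (hTτ : S.τbar ≤ T) (hν2 : 2 ≤ ν) (hαt : 0 < αt)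
    (hPE' : αt ≤ ∫ s in ((ν-1)*T)..(ν*T), S.α s)
    (i j : Fin N) (M m : ℝ)
    (hInvUp : ∀ k : Fin N, ∀ u', (ν-2)*T - S.τbar ≤ u' → (⟪S.v k u', e⟫ : ℝ) ≤ M)
    (hInvLo : ∀ k : Fin N, ∀ u', (ν-2)*T - S.τbar ≤ u' → m ≤ (⟪S.v k u', e⟫ : ℝ))
    (hc : ∀ w' ∈ Set.Icc ((ν-1)*T - S.τbar) (ν*T), (⟪S.v j w', e⟫ : ℝ) ≤ ⟪S.v i w', e⟫) :
    Real.exp (-S.K*T) * (S.phi (ν*T) * αt) * (M - m) ≤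
      (M - ⟪S.v i (ν*T), e⟫) + (⟪S.v j (ν*T), e⟫ - m) := by
  have hNc := Ncast_pos hN
  have hτ0 := S.τbar_nonneg
  have hΦ := phi_pos S (ν*T)
  have ht₀0 : 0 ≤ (ν-2)*T := mul_nonneg (by linarith) hT.le
  have h0t1 : 0 ≤ (ν-1)*T := mul_nonneg (by linarith) hT.le
  have hd1 : (ν-1)*T - (ν-2)*T = T := by ring
  have hd2 : ν*T - (ν-1)*T = T := by ring
  have ht₀t1 : (ν-2)*T ≤ (ν-1)*T := by linarith
  have ht1ν : (ν-1)*T ≤ ν*T := by linarith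
  have hTt1 : T ≤ (ν-1)*T := by nlinarith
  have hMm : 0 ≤ M - m := by
    have h1 := hInvUp i ((ν-2)*T) (by linarith)
    have h2 := hInvLo i ((ν-2)*T) (by linarith)
    linarith
  have hMneg : ∀ k : Fin N, ∀ u', (ν-2)*T - S.τbar ≤ u' →
      (⟪S.v k u', -e⟫ : ℝ) ≤ -m := by
    intro k u' h
    simp only [inner_neg_right]
    linarith [hInvLo k u' h]
  have h_i := ftc_ineq S hN e ((ν-2)*T) M ht₀0 hInvUp i ht₀t1 ht1ν
  have h_j := ftc_ineq S hN (-e) ((ν-2)*T) (-m) ht₀0 hMneg j ht₀t1 ht1ν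
  simp only [inner_neg_right, sub_neg_eq_add] at h_j
  have hint1 := intInt_low S e M i h0t1 ht1ν
  have hint2 := intInt_low S (-e) (-m) j h0t1 ht1ν
  simp only [inner_neg_right, sub_neg_eq_add] at hint2
  -- pointwise comparison
  have hptw : ∀ s' ∈ Set.Icc ((ν-1)*T) (ν*T),
      S.phi (ν*T) * (M - m) * (Real.exp (S.K * s') * S.α s') ≤
      (Real.exp (S.K * s') * S.α s' *
        (∑ k ∈ Finset.univ.erase i, S.ψ ‖S.x i s' - S.x k (s' - S.τ s')‖ / ((N : ℝ) - 1) *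
          (M - ⟪S.v k (s' - S.τ s'), e⟫))) +
      (Real.exp (S.K * s') * S.α s' *
        (∑ k ∈ Finset.univ.erase j, S.ψ ‖S.x j s' - S.x k (s' - S.τ s')‖ / ((N : ℝ) - 1) *
          (-m + ⟪S.v k (s' - S.τ s'), e⟫))) := by
    intro s' hs'
    have hs'0 : 0 ≤ s' := le_trans h0t1 hs'.1
    have hτs' : S.τbar ≤ s' := by linarith [hs'.1]
    have hσJ1 : (ν-1)*T - S.τbar ≤ s' - S.τ s' := by
      have := tau_le S hs'0; linarith [hs'.1]
    have hσJ2 : s' - S.τ s' ≤ ν*T := by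
      have := tau_nonneg S hs'0; linarith [hs'.2]
    have hσlo : (ν-2)*T - S.τbar ≤ s' - S.τ s' := by linarith
    have hfji := hc (s' - S.τ s') ⟨hσJ1, hσJ2⟩
    have hb : ∀ a k : Fin N, S.phi (ν*T) / ((N:ℝ)-1) ≤
        S.ψ ‖S.x a s' - S.x k (s' - S.τ s')‖ / ((N:ℝ)-1) :=
      fun a k => (div_le_div_iff_of_pos_right hNc).mpr (b_lower S hN hτs' hs'.2 a k)
    have hS1 : S.phi (ν*T) / ((N:ℝ)-1) *
        (∑ k ∈ Finset.univ.erase i, (M - ⟪S.v k (s' - S.τ s'), e⟫)) ≤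
        ∑ k ∈ Finset.univ.erase i, S.ψ ‖S.x i s' - S.x k (s' - S.τ s')‖ / ((N : ℝ) - 1) *
          (M - ⟪S.v k (s' - S.τ s'), e⟫) := by
      rw [Finset.mul_sum]
      apply Finset.sum_le_sum
      intro k _
      exact mul_le_mul_of_nonneg_right (hb i k) (sub_nonneg.mpr (hInvUp k _ hσlo))
    have hS2 : S.phi (ν*T) / ((N:ℝ)-1) *
        (∑ k ∈ Finset.univ.erase j, (-m + ⟪S.v k (s' - S.τ s'), e⟫)) ≤
        ∑ k ∈ Finset.univ.erase j, S.ψ ‖S.x j s' - S.x k (s' - S.τ s')‖ / ((N : ℝ) - 1) *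
          (-m + ⟪S.v k (s' - S.τ s'), e⟫) := by
      rw [Finset.mul_sum]
      apply Finset.sum_le_sum
      intro k _
      have : 0 ≤ -m + ⟪S.v k (s' - S.τ s'), e⟫ := by linarith [hInvLo k _ hσlo]
      exact mul_le_mul_of_nonneg_right (hb j k) this
    have huniv : (∑ k : Fin N, (M - ⟪S.v k (s' - S.τ s'), e⟫)) +
        (∑ k : Fin N, (-m + ⟪S.v k (s' - S.τ s'), e⟫)) = (N:ℝ) * (M - m) := by
      rw [← Finset.sum_add_distrib]
      have : ∀ k : Fin N, (M - ⟪S.v k (s' - S.τ s'), e⟫) +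
          (-m + ⟪S.v k (s' - S.τ s'), e⟫) = M - m := fun k => by ring
      rw [Finset.sum_congr rfl (fun k _ => this k), Finset.sum_const, Finset.card_univ,
        Fintype.card_fin, nsmul_eq_mul]
    have hkey : ((N:ℝ)-1) * (M-m) ≤
        (∑ k ∈ Finset.univ.erase i, (M - ⟪S.v k (s' - S.τ s'), e⟫)) +
        (∑ k ∈ Finset.univ.erase j, (-m + ⟪S.v k (s' - S.τ s'), e⟫)) := by
      rw [Finset.sum_erase_eq_sub (Finset.mem_univ i),
        Finset.sum_erase_eq_sub (Finset.mem_univ j)]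
      have h2 := hfji
      linarith [huniv]
    have hEα : 0 ≤ Real.exp (S.K * s') * S.α s' :=
      mul_nonneg (Real.exp_pos _).le (alpha_nonneg S hs'0)
    have hfin : S.phi (ν*T) * (M - m) ≤
        (∑ k ∈ Finset.univ.erase i, S.ψ ‖S.x i s' - S.x k (s' - S.τ s')‖ / ((N : ℝ) - 1) *
          (M - ⟪S.v k (s' - S.τ s'), e⟫)) +
        (∑ k ∈ Finset.univ.erase j, S.ψ ‖S.x j s' - S.x k (s' - S.τ s')‖ / ((N : ℝ) - 1) *
          (-m + ⟪S.v k (s' - S.τ s'), e⟫)) := by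
      have h3 : S.phi (ν*T) / ((N:ℝ)-1) * (((N:ℝ)-1) * (M-m)) = S.phi (ν*T) * (M-m) := by
        field_simp
      have h4 : S.phi (ν*T) / ((N:ℝ)-1) * (((N:ℝ)-1) * (M-m)) ≤
          S.phi (ν*T) / ((N:ℝ)-1) *
          ((∑ k ∈ Finset.univ.erase i, (M - ⟪S.v k (s' - S.τ s'), e⟫)) +
           (∑ k ∈ Finset.univ.erase j, (-m + ⟪S.v k (s' - S.τ s'), e⟫))) :=
        mul_le_mul_of_nonneg_left hkey (div_nonneg hΦ.le hNc.le)
      rw [mul_add] at h4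
      linarith
    calc S.phi (ν*T) * (M - m) * (Real.exp (S.K * s') * S.α s')
        ≤ ((∑ k ∈ Finset.univ.erase i, S.ψ ‖S.x i s' - S.x k (s' - S.τ s')‖ / ((N : ℝ) - 1) *
            (M - ⟪S.v k (s' - S.τ s'), e⟫)) +
          (∑ k ∈ Finset.univ.erase j, S.ψ ‖S.x j s' - S.x k (s' - S.τ s')‖ / ((N : ℝ) - 1) *
            (-m + ⟪S.v k (s' - S.τ s'), e⟫))) * (Real.exp (S.K * s') * S.α s') :=
          mul_le_mul_of_nonneg_right hfin hEα
      _ = _ := by ring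
  -- integral comparison
  have hlhs_int : IntervalIntegrable
      (fun s' => S.phi (ν*T) * (M - m) * (Real.exp (S.K * s') * S.α s'))
      MeasureTheory.volume ((ν-1)*T) (ν*T) := by
    have heq : (fun s' => S.phi (ν*T) * (M - m) * (Real.exp (S.K * s') * S.α s')) =
        fun s' => S.α s' * (S.phi (ν*T) * (M - m) * Real.exp (S.K * s')) := by
      funext s'; ring
    rw [heq]
    exact intInt_alpha_mul S (continuous_const.mul
      (Real.continuous_exp.comp (continuous_const.mul continuous_id))) h0t1 ht1ν
  have hmono := intervalIntegral.integral_mono_on ht1ν hlhs_int (hint1.add hint2) hptw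
  rw [intervalIntegral.integral_add hint1 hint2] at hmono
  -- lower bound for ∫ exp * α
  have hlow : Real.exp (S.K * ((ν-1)*T)) * αt ≤
      ∫ s' in ((ν-1)*T)..(ν*T), Real.exp (S.K * s') * S.α s' := by
    have hmono2 := intervalIntegral.integral_mono_on ht1ν
      (intInt_expalpha S h0t1 ht1ν (Real.exp (S.K * ((ν-1)*T))))
      (intInt_expalpha' S h0t1 ht1ν) (fun s' hs' => by
        have hs'0 : 0 ≤ s' := le_trans h0t1 hs'.1
        exact mul_le_mul_of_nonneg_right
          (Real.exp_le_exp.mpr (by nlinarith [hs'.1, K_pos S] : S.K * ((ν-1)*T) ≤ S.K * s'))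
          (alpha_nonneg S hs'0))
    rw [intervalIntegral.integral_const_mul] at hmono2
    have h5 : Real.exp (S.K * ((ν-1)*T)) * αt ≤
        Real.exp (S.K * ((ν-1)*T)) * ∫ s' in ((ν-1)*T)..(ν*T), S.α s' :=
      mul_le_mul_of_nonneg_left hPE' (Real.exp_pos _).le
    linarith
  -- relate ∫ of lhs to const * integral
  have hconst : ∫ s' in ((ν-1)*T)..(ν*T),
      S.phi (ν*T) * (M - m) * (Real.exp (S.K * s') * S.α s') =
      S.phi (ν*T) * (M - m) * ∫ s' in ((ν-1)*T)..(ν*T), Real.exp (S.K * s') * S.α s' :=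
    intervalIntegral.integral_const_mul _ _
  -- positivity of discarded boundary terms
  have hfi0 : 0 ≤ M - ⟪S.v i ((ν-1)*T), e⟫ := sub_nonneg.mpr (hInvUp i _ (by linarith))
  have hfj0 : 0 ≤ -m + ⟪S.v j ((ν-1)*T), e⟫ := by linarith [hInvLo j ((ν-1)*T) (by linarith)]
  have hexpt1 : (0:ℝ) ≤ Real.exp (S.K * ((ν-1)*T)) := (Real.exp_pos _).le
  have hcomb : Real.exp (S.K * ((ν-1)*T)) * (S.phi (ν*T) * αt * (M - m)) ≤
      Real.exp (S.K * (ν*T)) * ((M - ⟪S.v i (ν*T), e⟫) + (-m + ⟪S.v j (ν*T), e⟫)) := by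
    have hA1 : S.phi (ν*T) * (M - m) * (Real.exp (S.K * ((ν-1)*T)) * αt) ≤
        S.phi (ν*T) * (M - m) *
          ∫ s' in ((ν-1)*T)..(ν*T), Real.exp (S.K * s') * S.α s' :=
      mul_le_mul_of_nonneg_left hlow (mul_nonneg hΦ.le hMm)
    have hB1 := mul_nonneg hexpt1 hfi0
    have hB2 := mul_nonneg hexpt1 hfj0
    linarith [hmono, hconst, h_i, h_j, hA1, hB1, hB2]
  have hshift := exp_shift hcomb
  have hre : S.K * ((ν-1)*T - ν*T) = -S.K * T := by ring
  rw [hre] at hshift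
  linarith [hshift]

end Gain
set_option maxHeartbeats 1600000 in
/-- the key contraction estimate `D_{n+1} ≤ (1 - C_n) D_{n-2}` with
`C_n` independent of the number of agents. -/
theorem cs_contraction {d N : ℕ} (S : CS d N) (hN : 2 ≤ N)
    (T αt : ℝ) (hT : 0 < T) (hTτ : S.τbar ≤ T) (hαt : 0 < αt)
    (hPE : ∀ t, 0 ≤ t → αt ≤ ∫ s in t..(t + T), S.α s) :
    ∀ n : ℕ, 2 ≤ n →
      Real.exp (-S.K * T) *
          min (Real.exp (-S.K * (T + S.τbar)))
            (Real.exp (-S.K * T) * S.phi ((n : ℝ) * T) * αt) ∈ Set.Ioo (0:ℝ) 1 ∧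
      S.Dn T (n + 1) ≤
        (1 - Real.exp (-S.K * T) *
          min (Real.exp (-S.K * (T + S.τbar)))
            (Real.exp (-S.K * T) * S.phi ((n : ℝ) * T) * αt)) * S.Dn T (n - 2) := by
  intro n hn
  have hK := K_pos S
  have hτ0 := S.τbar_nonneg
  have hNc := Ncast_pos hN
  set ν : ℝ := (n : ℝ) with hν
  have hν2 : (2:ℝ) ≤ ν := by rw [hν]; exact_mod_cast hn
  have hΦ := phi_pos S (ν * T)
  set A := Real.exp (-S.K * (T + S.τbar)) with hA
  set B := Real.exp (-S.K * T) * S.phi (ν * T) * αt with hB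
  set C := Real.exp (-S.K * T) * min A B with hC
  have hApos : 0 < A := Real.exp_pos _
  have hBpos : 0 < B := mul_pos (mul_pos (Real.exp_pos _) hΦ) hαt
  have hCpos : 0 < C := mul_pos (Real.exp_pos _) (lt_min hApos hBpos)
  have hA1 : A ≤ 1 := by
    rw [hA]
    have h1 : -S.K * (T + S.τbar) ≤ 0 := by nlinarith
    calc Real.exp (-S.K * (T + S.τbar)) ≤ Real.exp 0 := Real.exp_le_exp.mpr h1
      _ = 1 := Real.exp_zero
  have hElt1 : Real.exp (-S.K * T) < 1 := by
    have h1 : -S.K * T < 0 := by nlinarith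
    calc Real.exp (-S.K * T) < Real.exp 0 := Real.exp_lt_exp.mpr h1
      _ = 1 := Real.exp_zero
  have hC1 : C < 1 := by
    calc C ≤ Real.exp (-S.K * T) * A :=
          mul_le_mul_of_nonneg_left (min_le_left _ _) (Real.exp_pos _).le
      _ ≤ Real.exp (-S.K * T) * 1 := mul_le_mul_of_nonneg_left hA1 (Real.exp_pos _).le
      _ < 1 := by rw [mul_one]; exact hElt1
  refine ⟨⟨hCpos, hC1⟩, ?_⟩
  -- Part 2 : the contraction estimate
  have hcast2 : ((n - 2 : ℕ) : ℝ) = ν - 2 := by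
    rw [hν, Nat.cast_sub hn]
    norm_num
  have hcast1 : ((n + 1 : ℕ) : ℝ) = ν + 1 := by push_cast [hν]; ring
  have ht₀0 : 0 ≤ (ν - 2) * T := mul_nonneg (by linarith) hT.le
  have hw2lo : -S.τbar ≤ (ν - 2) * T - S.τbar := by linarith
  have hDn2 : S.Dn T (n - 2) = sSup {r | ∃ i j : Fin N,
      ∃ s ∈ Set.Icc ((ν - 2) * T - S.τbar) ((ν - 2) * T),
      ∃ u ∈ Set.Icc ((ν - 2) * T - S.τbar) ((ν - 2) * T), r = ‖S.v i s - S.v j u‖} := by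
    rw [CS.Dn, hcast2]
  have hDn1 : S.Dn T (n + 1) = sSup {r | ∃ i j : Fin N,
      ∃ s ∈ Set.Icc ((ν + 1) * T - S.τbar) ((ν + 1) * T),
      ∃ u ∈ Set.Icc ((ν + 1) * T - S.τbar) ((ν + 1) * T), r = ‖S.v i s - S.v j u‖} := by
    rw [CS.Dn, hcast1]
  have hD2bdd : BddAbove {r | ∃ i j : Fin N,
      ∃ s ∈ Set.Icc ((ν - 2) * T - S.τbar) ((ν - 2) * T),
      ∃ u ∈ Set.Icc ((ν - 2) * T - S.τbar) ((ν - 2) * T), r = ‖S.v i s - S.v j u‖} := by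
    refine ⟨2 * S.C0V, ?_⟩
    rintro r ⟨i, j, s, hs, u, hu, rfl⟩
    have h1 := vel_bound S hN (le_trans hw2lo hs.1) i
    have h2 := vel_bound S hN (le_trans hw2lo hu.1) j
    calc ‖S.v i s - S.v j u‖ ≤ ‖S.v i s‖ + ‖S.v j u‖ := norm_sub_le _ _
      _ ≤ 2 * S.C0V := by linarith
  have hD2nonneg : 0 ≤ S.Dn T (n - 2) := by
    rw [hDn2]
    apply Real.sSup_nonneg
    rintro r ⟨i, j, s, hs, u, hu, rfl⟩
    exact norm_nonneg _
  rw [hDn1]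
  apply Real.sSup_le
  · rintro r ⟨i, j, s, hs, u, hu, rfl⟩
    by_cases h0 : S.v i s - S.v j u = 0
    · rw [h0, norm_zero]
      exact mul_nonneg (by linarith) hD2nonneg
    · set w : EuclideanSpace ℝ (Fin d) := S.v i s - S.v j u with hw
      set e : EuclideanSpace ℝ (Fin d) := ‖w‖⁻¹ • w with he
      have he1 : ‖e‖ = 1 := norm_smul_inv_norm h0
      have hre : (⟪w, e⟫ : ℝ) = ‖w‖ := by
        rw [he, real_inner_smul_right, real_inner_self_eq_norm_mul_norm]
        have hne : ‖w‖ ≠ 0 := norm_ne_zero_iff.mpr h0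
        field_simp
      have hw2ab : (ν - 2) * T - S.τbar ≤ (ν - 2) * T := by linarith
      obtain ⟨k₀, σ₀, hσ₀, hmax⟩ := exists_max_window S hN e hw2ab
      obtain ⟨k₁, σ₁, hσ₁, hmin'⟩ := exists_max_window S hN (-e) hw2ab
      set M : ℝ := ⟪S.v k₀ σ₀, e⟫ with hM
      set m : ℝ := ⟪S.v k₁ σ₁, e⟫ with hm
      have hInvUp : ∀ k : Fin N, ∀ u', (ν - 2) * T - S.τbar ≤ u' →
          (⟪S.v k u', e⟫ : ℝ) ≤ M :=
        invariance S hN e ((ν - 2) * T) M ht₀0 (fun k u' hu' => hmax k u' hu')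
      have hInvLo' : ∀ k : Fin N, ∀ u', (ν - 2) * T - S.τbar ≤ u' →
          (⟪S.v k u', -e⟫ : ℝ) ≤ -m := by
        apply invariance S hN (-e) ((ν - 2) * T) (-m) ht₀0
        intro k u' hu'
        have h1 := hmin' k u' hu'
        simp only [inner_neg_right] at h1 ⊢
        simpa using h1
      have hInvLo : ∀ k : Fin N, ∀ u', (ν - 2) * T - S.τbar ≤ u' →
          m ≤ (⟪S.v k u', e⟫ : ℝ) := by
        intro k u' hu'
        have h1 := hInvLo' k u' hu'
        simp only [inner_neg_right] at h1
        linarith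
      have hMm : 0 ≤ M - m := by
        have h1 := hInvUp k₀ σ₀ hσ₀.1
        have h2 := hInvLo k₀ σ₀ hσ₀.1
        linarith
      have hMmD : M - m ≤ S.Dn T (n - 2) := by
        have h1 : M - m = ⟪S.v k₀ σ₀ - S.v k₁ σ₁, e⟫ := by rw [inner_sub_left]
        have h2 : (⟪S.v k₀ σ₀ - S.v k₁ σ₁, e⟫ : ℝ) ≤ ‖S.v k₀ σ₀ - S.v k₁ σ₁‖ := by
          calc (⟪S.v k₀ σ₀ - S.v k₁ σ₁, e⟫ : ℝ)
              ≤ ‖S.v k₀ σ₀ - S.v k₁ σ₁‖ * ‖e‖ := real_inner_le_norm _ _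
            _ = ‖S.v k₀ σ₀ - S.v k₁ σ₁‖ := by rw [he1, mul_one]
        rw [hDn2]
        exact le_trans (h1 ▸ h2) (le_csSup hD2bdd ⟨k₀, k₁, σ₀, hσ₀, σ₁, hσ₁, rfl⟩)
      -- persistence from νT to s and u
      have hsl : ν * T ≤ s := by
        have h1 := hs.1
        have : (ν + 1) * T - S.τbar = ν * T + (T - S.τbar) := by ring
        linarith
      have hul : ν * T ≤ u := by
        have h1 := hu.1
        have : (ν + 1) * T - S.τbar = ν * T + (T - S.τbar) := by ring
        linarith
      have ht₀ν : (ν - 2) * T ≤ ν * T := by nlinarith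
      have hνT0 : (ν - 2) * T - S.τbar ≤ ν * T := by linarith
      have hpers_i := pers S hN e ((ν - 2) * T) M ht₀0 hInvUp i ht₀ν hsl
      have hpers_j := pers S hN (-e) ((ν - 2) * T) (-m) ht₀0 hInvLo' j ht₀ν hul
      simp only [inner_neg_right, sub_neg_eq_add] at hpers_j
      have hstep1 : Real.exp (-S.K * T) * (M - ⟪S.v i (ν * T), e⟫) ≤
          M - ⟪S.v i s, e⟫ := by
        have h1 := exp_shift hpers_i
        have h2 : Real.exp (-S.K * T) ≤ Real.exp (S.K * (ν * T - s)) := by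
          apply Real.exp_le_exp.mpr
          nlinarith [hs.2]
        have h3 : 0 ≤ M - ⟪S.v i (ν * T), e⟫ := sub_nonneg.mpr (hInvUp i (ν * T) hνT0)
        calc Real.exp (-S.K * T) * (M - ⟪S.v i (ν * T), e⟫)
            ≤ Real.exp (S.K * (ν * T - s)) * (M - ⟪S.v i (ν * T), e⟫) :=
              mul_le_mul_of_nonneg_right h2 h3
          _ ≤ M - ⟪S.v i s, e⟫ := h1
      have hstep2 : Real.exp (-S.K * T) * (-m + ⟪S.v j (ν * T), e⟫) ≤
          -m + ⟪S.v j u, e⟫ := by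
        have h1 := exp_shift hpers_j
        have h2 : Real.exp (-S.K * T) ≤ Real.exp (S.K * (ν * T - u)) := by
          apply Real.exp_le_exp.mpr
          nlinarith [hu.2]
        have h3 : 0 ≤ -m + ⟪S.v j (ν * T), e⟫ := by linarith [hInvLo j (ν * T) hνT0]
        calc Real.exp (-S.K * T) * (-m + ⟪S.v j (ν * T), e⟫)
            ≤ Real.exp (S.K * (ν * T - u)) * (-m + ⟪S.v j (ν * T), e⟫) :=
              mul_le_mul_of_nonneg_right h2 h3
          _ ≤ -m + ⟪S.v j u, e⟫ := h1
      -- the gain estimate for G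
      have hG : min A B * (M - m) ≤
          (M - ⟪S.v i (ν * T), e⟫) + (⟪S.v j (ν * T), e⟫ - m) := by
        by_cases hcase : ∀ w' ∈ Set.Icc ((ν - 1) * T - S.τbar) (ν * T),
            (⟪S.v j w', e⟫ : ℝ) ≤ ⟪S.v i w', e⟫
        · -- case 2 : apply the gain lemma
          have hPE' : αt ≤ ∫ s' in ((ν - 1) * T)..(ν * T), S.α s' := by
            have h1 := hPE ((ν - 1) * T) (mul_nonneg (by linarith) hT.le)
            have h2 : (ν - 1) * T + T = ν * T := by ring
            rwa [h2] at h1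
          have h3 := gain S hN e hT hTτ hν2 hαt hPE' i j M m hInvUp hInvLo hcase
          calc min A B * (M - m) ≤ B * (M - m) :=
                mul_le_mul_of_nonneg_right (min_le_right _ _) hMm
            _ = Real.exp (-S.K * T) * (S.phi (ν * T) * αt) * (M - m) := by rw [hB]; ring
            _ ≤ _ := h3
        · -- case 1 : some crossing point s₀
          push_neg at hcase
          obtain ⟨s₀, hs₀, hlt⟩ := hcase
          have hs₀t₀ : (ν - 2) * T ≤ s₀ := by
            have := hs₀.1
            nlinarith
          have h1 := pers S hN e ((ν - 2) * T) M ht₀0 hInvUp i hs₀t₀ hs₀.2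
          have h2 := pers S hN (-e) ((ν - 2) * T) (-m) ht₀0 hInvLo' j hs₀t₀ hs₀.2
          simp only [inner_neg_right, sub_neg_eq_add] at h2
          have h4 : Real.exp (S.K * s₀) *
              ((M - ⟪S.v i s₀, e⟫) + (-m + ⟪S.v j s₀, e⟫)) ≤
              Real.exp (S.K * (ν * T)) *
              ((M - ⟪S.v i (ν * T), e⟫) + (-m + ⟪S.v j (ν * T), e⟫)) := by
            nlinarith [h1, h2]
          have h5 := exp_shift h4
          have h6 : Real.exp (-S.K * (T + S.τbar)) ≤ Real.exp (S.K * (s₀ - ν * T)) := by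
            apply Real.exp_le_exp.mpr
            nlinarith [hs₀.1]
          have h7 : M - m ≤ (M - ⟪S.v i s₀, e⟫) + (-m + ⟪S.v j s₀, e⟫) := by
            linarith [hlt.le]
          calc min A B * (M - m) ≤ A * (M - m) :=
                mul_le_mul_of_nonneg_right (min_le_left _ _) hMm
            _ ≤ Real.exp (S.K * (s₀ - ν * T)) *
                ((M - ⟪S.v i s₀, e⟫) + (-m + ⟪S.v j s₀, e⟫)) := by
                rw [hA]
                apply mul_le_mul h6 h7 hMm (Real.exp_pos _).le
            _ ≤ _ := by linarith [h5]
      -- combine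
      have hsum : C * (M - m) ≤ (M - ⟪S.v i s, e⟫) + (⟪S.v j u, e⟫ - m) := by
        have h1 : C * (M - m) = Real.exp (-S.K * T) * (min A B * (M - m)) := by
          rw [hC]; ring
        calc C * (M - m) = Real.exp (-S.K * T) * (min A B * (M - m)) := h1
          _ ≤ Real.exp (-S.K * T) *
              ((M - ⟪S.v i (ν * T), e⟫) + (⟪S.v j (ν * T), e⟫ - m)) :=
            mul_le_mul_of_nonneg_left hG (Real.exp_pos _).le
          _ ≤ (M - ⟪S.v i s, e⟫) + (⟪S.v j u, e⟫ - m) := by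
            have := hstep1
            have := hstep2
            linarith
      have hrr : ‖S.v i s - S.v j u‖ = (⟪S.v i s, e⟫ : ℝ) - ⟪S.v j u, e⟫ := by
        rw [← inner_sub_left, ← hw, hre, hw]
      rw [hrr]
      have hfs : (⟪S.v i s, e⟫ : ℝ) - ⟪S.v j u, e⟫ ≤ (1 - C) * (M - m) := by linarith
      calc (⟪S.v i s, e⟫ : ℝ) - ⟪S.v j u, e⟫ ≤ (1 - C) * (M - m) := hfs
        _ ≤ (1 - C) * S.Dn T (n - 2) := mul_le_mul_of_nonneg_left hMmD (by linarith)
  · exact mul_nonneg (by linarith) hD2nonneg
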